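/- Let Π : S^1 \ {i} → ℝ be the stereographic projection from i, i.e. Π(e^{iθ}) = Re(2/(e^{iθ} − i) − i). Then for any measurable f : ℝ → ℝ, ∬_{ℝ×ℝ} |f(x) − f(y)|^2/|x−y|^2 dx dy = ∬_{S^1×S^1} |f∘Π(e^{iθ}) − f∘Π(e^{iτ})|^2/|e^{iθ} − e^{iτ}|^2 dθ dτ. -/

import Mathlib

open MeasureTheory
open scoped ENNReal

/-- The stereographic projection `Π : S¹ \ {i} → ℝ`, `Π(e^{iθ}) = Re(2/(e^{iθ}-i) - i)`,
as a function of the angle `θ`. -/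
noncomputable def sproj (θ : ℝ) : ℝ :=
  (2 / (Complex.exp (θ * Complex.I) - Complex.I) - Complex.I).re

namespace SprojAux

open Set Real

lemma sproj_eq (θ : ℝ) : sproj θ = Real.cos θ / (1 - Real.sin θ) := by
  have h : Complex.exp (θ * Complex.I) - Complex.I
      = Complex.mk (Real.cos θ) (Real.sin θ - 1) := by
    rw [Complex.exp_mul_I]
    apply Complex.ext <;> simp [Complex.cos_ofReal_re, Complex.sin_ofReal_re]
  unfold sproj
  rw [h]
  have hpy := Real.sin_sq_add_cos_sq θ
  rcases eq_or_ne (Real.sin θ) 1 with hs | hs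
  · have hc : Real.cos θ = 0 := by nlinarith
    simp [Complex.div_re, Complex.normSq_apply, hs, hc]
  · have h1 : (1 : ℝ) - Real.sin θ ≠ 0 := by intro h0; apply hs; linarith
    have hd : Real.cos θ * Real.cos θ + (Real.sin θ - 1) * (Real.sin θ - 1)
        = 2 * (1 - Real.sin θ) := by nlinarith
    simp only [Complex.sub_re, Complex.div_re, Complex.normSq_apply, Complex.I_re, Complex.I_im]
    norm_num
    rw [hd, div_eq_div_iff (by intro h0; apply h1; linarith) h1]
    ring

lemma exp_mk (θ : ℝ) : Complex.exp (θ * Complex.I) = Complex.mk (Real.cos θ) (Real.sin θ) := by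
  rw [Complex.exp_mul_I]
  apply Complex.ext <;> simp [Complex.cos_ofReal_re, Complex.sin_ofReal_re]

lemma normsq_exp_sub (θ τ : ℝ) :
    ‖Complex.exp (θ * Complex.I) - Complex.exp (τ * Complex.I)‖ ^ 2
      = 2 - 2 * (Real.cos θ * Real.cos τ + Real.sin θ * Real.sin τ) := by
  rw [Complex.sq_norm, exp_mk, exp_mk]
  simp only [Complex.normSq_apply, Complex.sub_re, Complex.sub_im]
  have h1 := Real.sin_sq_add_cos_sq θ
  have h2 := Real.sin_sq_add_cos_sq τ
  nlinarith

lemma hasDerivAt_sproj {θ : ℝ} (hs : Real.sin θ ≠ 1) :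
    HasDerivAt sproj (1 / (1 - Real.sin θ)) θ := by
  have heq : sproj = fun x => Real.cos x / (1 - Real.sin x) := funext sproj_eq
  rw [heq]
  have h1 : (1 : ℝ) - Real.sin θ ≠ 0 := by intro h0; apply hs; linarith
  have := (Real.hasDerivAt_cos θ).div ((hasDerivAt_const θ (1:ℝ)).sub (Real.hasDerivAt_sin θ)) h1
  refine this.congr_deriv ?_
  symm
  have hpy := Real.sin_sq_add_cos_sq θ
  simp only [Pi.sub_apply]
  rw [div_eq_div_iff h1 (pow_ne_zero 2 h1)]
  linear_combination (Real.sin θ - 1) * hpy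

lemma key_id (θ τ : ℝ) :
    (Real.cos θ * (1 - Real.sin τ) - Real.cos τ * (1 - Real.sin θ)) ^ 2
      = (2 - 2 * (Real.cos θ * Real.cos τ + Real.sin θ * Real.sin τ))
        * ((1 - Real.sin θ) * (1 - Real.sin τ)) := by
  linear_combination (1 - Real.sin τ)^2 * (Real.sin_sq_add_cos_sq θ)
    + (1 - Real.sin θ)^2 * (Real.sin_sq_add_cos_sq τ)

lemma sin_ne_one' {θ : ℝ} (h1 : θ ∈ Set.Ioc (0:ℝ) (2 * π)) (h2 : θ ≠ π / 2) :
    Real.sin θ ≠ 1 := by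
  intro hs
  rw [Real.sin_eq_one_iff] at hs
  obtain ⟨k, hk⟩ := hs
  have hpi := Real.pi_pos
  obtain ⟨h1a, h1b⟩ := h1
  have hk0 : k = 0 := by
    rcases lt_trichotomy k 0 with h | h | h
    · have hk1 : k ≤ -1 := by omega
      have : (k:ℝ) ≤ -1 := by exact_mod_cast hk1
      nlinarith
    · exact h
    · have : (1:ℝ) ≤ (k:ℝ) := by exact_mod_cast h
      nlinarith
  apply h2
  rw [hk0] at hk
  push_cast at hk
  linarith

lemma sproj_tan {a : ℝ} (ha : Real.cos a ≠ 0) : sproj (2*a - π/2) = Real.tan a := by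
  rw [sproj_eq, Real.sin_sub, Real.cos_sub, Real.sin_pi_div_two, Real.cos_pi_div_two,
    Real.sin_two_mul, Real.cos_two_mul, Real.tan_eq_sin_div_cos]
  have h : (1 - (2 * Real.sin a * Real.cos a * 0 - (2 * Real.cos a ^ 2 - 1) * 1))
      = 2 * Real.cos a ^ 2 := by ring
  rw [h]
  field_simp
  ring

lemma sproj_surj (y : ℝ) : ∃ θ ∈ Set.Ioo (0:ℝ) (π/2) ∪ Set.Ioc (π/2) (2*π), sproj θ = y := by
  have hpi := Real.pi_pos
  set a := Real.arctan y with ha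
  have hc : Real.cos a ≠ 0 := (Real.cos_arctan_pos y).ne'
  have hb1 : -(π/2) < a := Real.neg_pi_div_two_lt_arctan y
  have hb2 : a < π/2 := Real.arctan_lt_pi_div_two y
  rcases lt_or_ge 1 y with hy | hy
  · refine ⟨2*a - π/2, Or.inl ⟨?_, ?_⟩, by rw [sproj_tan hc]; exact Real.tan_arctan y⟩
    · have : π/4 < a := by rw [ha, ← Real.arctan_one]; exact Real.arctan_strictMono hy
      linarith
    · linarith
  · have ha4 : a ≤ π/4 := by rw [ha, ← Real.arctan_one]; exact Real.arctan_strictMono.monotone hy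
    refine ⟨2*a - π/2 + 2*π, Or.inr ⟨?_, ?_⟩, ?_⟩
    · linarith
    · linarith
    · rw [sproj_eq, Real.sin_add_two_pi, Real.cos_add_two_pi, ← sproj_eq, sproj_tan hc]
      exact Real.tan_arctan y

lemma sin_lt_one_S1 {θ : ℝ} (h : θ ∈ Set.Ioo (0:ℝ) (π/2)) : Real.sin θ < 1 := by
  have hpi := Real.pi_pos
  exact lt_of_le_of_ne (Real.sin_le_one θ)
    (sin_ne_one' ⟨h.1, by linarith [h.2]⟩ (ne_of_lt h.2))

lemma sin_lt_one_S2 {θ : ℝ} (h : θ ∈ Set.Ioc (π/2) (2*π)) : Real.sin θ < 1 := by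
  have hpi := Real.pi_pos
  exact lt_of_le_of_ne (Real.sin_le_one θ)
    (sin_ne_one' ⟨by linarith [h.1], h.2⟩ (ne_of_gt h.1))

lemma sin_lt_one_S {θ : ℝ} (h : θ ∈ Set.Ioo (0:ℝ) (π/2) ∪ Set.Ioc (π/2) (2*π)) :
    Real.sin θ < 1 := by
  rcases h with h | h
  · exact sin_lt_one_S1 h
  · exact sin_lt_one_S2 h

lemma one_lt_sproj {θ : ℝ} (h : θ ∈ Set.Ioo (0:ℝ) (π/2)) : 1 < sproj θ := by
  have hpi := Real.pi_pos
  have hs : Real.sin θ < 1 := sin_lt_one_S1 h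
  have hsp : 0 < Real.sin θ := Real.sin_pos_of_pos_of_lt_pi h.1 (by linarith [h.2])
  have hcp : 0 < Real.cos θ := Real.cos_pos_of_mem_Ioo ⟨by linarith [h.1], h.2⟩
  have hpy := Real.sin_sq_add_cos_sq θ
  rw [sproj_eq, lt_div_iff₀ (by linarith)]
  nlinarith

lemma sproj_le_one {θ : ℝ} (h : θ ∈ Set.Ioc (π/2) (2*π)) : sproj θ ≤ 1 := by
  have hpi := Real.pi_pos
  have hs : Real.sin θ < 1 := sin_lt_one_S2 h
  have hkey : Real.cos θ + Real.sin θ ≤ 1 := by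
    rcases le_or_gt θ π with hθ | hθ
    · have hc : Real.cos θ ≤ 0 :=
        Real.cos_nonpos_of_pi_div_two_le_of_le (le_of_lt h.1) (by linarith)
      linarith [Real.sin_le_one θ]
    · have hsn : Real.sin θ ≤ 0 := by
        have : Real.sin (θ - 2*π) ≤ 0 :=
          Real.sin_nonpos_of_nonpos_of_neg_pi_le (by linarith [h.2]) (by linarith)
        rwa [Real.sin_sub_two_pi] at this
      linarith [Real.cos_le_one θ]
  rw [sproj_eq, div_le_one (by linarith)]
  linarith

lemma sproj_strictMonoOn_S1 : StrictMonoOn sproj (Set.Ioo (0:ℝ) (π/2)) := by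
  apply strictMonoOn_of_deriv_pos (convex_Ioo _ _)
  · intro x hx
    exact (hasDerivAt_sproj (ne_of_lt (sin_lt_one_S1 hx))).continuousAt.continuousWithinAt
  · intro x hx
    rw [interior_Ioo] at hx
    rw [(hasDerivAt_sproj (ne_of_lt (sin_lt_one_S1 hx))).deriv]
    have h1 : (0:ℝ) < 1 - Real.sin x := by linarith [sin_lt_one_S1 hx]
    positivity

lemma sproj_strictMonoOn_S2 : StrictMonoOn sproj (Set.Ioc (π/2) (2*π)) := by
  apply strictMonoOn_of_deriv_pos (convex_Ioc _ _)
  · intro x hx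
    exact (hasDerivAt_sproj (ne_of_lt (sin_lt_one_S2 hx))).continuousAt.continuousWithinAt
  · intro x hx
    rw [interior_Ioc] at hx
    have hx' : x ∈ Set.Ioc (π/2) (2*π) := ⟨hx.1, le_of_lt hx.2⟩
    rw [(hasDerivAt_sproj (ne_of_lt (sin_lt_one_S2 hx'))).deriv]
    have h1 : (0:ℝ) < 1 - Real.sin x := by linarith [sin_lt_one_S2 hx']
    positivity

lemma sproj_injOn : Set.InjOn sproj (Set.Ioo (0:ℝ) (π/2) ∪ Set.Ioc (π/2) (2*π)) := by
  intro x hx y hy hxy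
  rcases hx with hx | hx <;> rcases hy with hy | hy
  · exact sproj_strictMonoOn_S1.injOn hx hy hxy
  · exact absurd hxy (by have := one_lt_sproj hx; have := sproj_le_one hy; intro h; linarith)
  · exact absurd hxy (by have := one_lt_sproj hy; have := sproj_le_one hx; intro h; linarith)
  · exact sproj_strictMonoOn_S2.injOn hx hy hxy

lemma sproj_image : sproj '' (Set.Ioo (0:ℝ) (π/2) ∪ Set.Ioc (π/2) (2*π)) = Set.univ := by
  apply Set.eq_univ_of_forall
  intro y
  obtain ⟨θ, hθ, hy⟩ := sproj_surj y
  exact ⟨θ, hθ, hy⟩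

/-- 1D lintegral change of variables. -/
lemma lintegral_image_1d {s : Set ℝ} {F F' : ℝ → ℝ} (hs : MeasurableSet s)
    (hF' : ∀ x ∈ s, HasDerivWithinAt F (F' x) s x) (hF : Set.InjOn F s) (g : ℝ → ℝ≥0∞) :
    ∫⁻ x in F '' s, g x = ∫⁻ x in s, ENNReal.ofReal |F' x| * g (F x) := by
  simpa only [ContinuousLinearMap.det_toSpanSingleton] using
    lintegral_image_eq_lintegral_abs_det_fderiv_mul volume hs
      (fun x hx => (hF' x hx).hasFDerivWithinAt) hF g

end SprojAux

open SprojAux Real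

/-- Invariance of the `Ḣ^{1/2}` Gagliardo energy under stereographic projection:
`∬_{ℝ×ℝ} |f(x)-f(y)|²/|x-y|² = ∬_{S¹×S¹} |f∘Π(e^{iθ})-f∘Π(e^{iτ})|²/|e^{iθ}-e^{iτ}|²`
for any measurable `f` (both sides possibly infinite, hence stated in `ℝ≥0∞`). -/
theorem stmt13 (f : ℝ → ℝ) (hf : Measurable f) :
    ∫⁻ p : ℝ × ℝ, ENNReal.ofReal ((f p.1 - f p.2) ^ 2 / (p.1 - p.2) ^ 2) =
      ∫⁻ θ in Set.Ioc (0 : ℝ) (2 * Real.pi), ∫⁻ τ in Set.Ioc (0 : ℝ) (2 * Real.pi),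
        ENNReal.ofReal ((f (sproj θ) - f (sproj τ)) ^ 2 /
          ‖Complex.exp (θ * Complex.I) - Complex.exp (τ * Complex.I)‖ ^ 2) := by
  have hpi := Real.pi_pos
  set S : Set ℝ := Set.Ioo (0:ℝ) (π/2) ∪ Set.Ioc (π/2) (2*π) with hS
  have hSm : MeasurableSet S := (measurableSet_Ioo).union measurableSet_Ioc
  set D : ℝ → ℝ := fun θ => 1 / (1 - Real.sin θ) with hD
  have hderiv : ∀ x ∈ S, HasDerivWithinAt sproj (D x) S x := fun x hx =>
    (hasDerivAt_sproj (ne_of_lt (sin_lt_one_S hx))).hasDerivWithinAt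
  set G : ℝ → ℝ → ℝ≥0∞ := fun x y => ENNReal.ofReal ((f x - f y) ^ 2 / (x - y) ^ 2) with hG
  -- measurability of the two-variable integrand
  have hGm : Measurable (fun p : ℝ × ℝ => G p.1 p.2) := by
    apply Measurable.ennreal_ofReal
    exact (((hf.comp measurable_fst).sub (hf.comp measurable_snd)).pow_const 2).div
      ((measurable_fst.sub measurable_snd).pow_const 2)
  -- Step 1: iterated integral
  rw [Measure.volume_eq_prod, lintegral_prod _ hGm.aemeasurable]
  -- Step 2: substitute in the outer integral
  have houter : ∀ (H : ℝ → ℝ≥0∞),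
      (∫⁻ x, H x) = ∫⁻ θ in S, ENNReal.ofReal |D θ| * H (sproj θ) := by
    intro H
    rw [← setLIntegral_univ, ← sproj_image, lintegral_image_1d hSm hderiv sproj_injOn]
  rw [houter]
  -- Step 3: substitute in the inner integral (under the binder)
  have hinner : ∀ θ ∈ S,
      ENNReal.ofReal |D θ| * (∫⁻ y, G (sproj θ) y)
        = ∫⁻ τ in S, ENNReal.ofReal |D θ| * (ENNReal.ofReal |D τ| * G (sproj θ) (sproj τ)) := by
    intro θ _
    rw [← setLIntegral_univ, ← sproj_image, lintegral_image_1d hSm hderiv sproj_injOn,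
      lintegral_const_mul' _ _ ENNReal.ofReal_ne_top]
  -- pointwise identity on S × S
  have hpt : ∀ θ ∈ S, ∀ τ ∈ S,
      ENNReal.ofReal |D θ| * (ENNReal.ofReal |D τ| * G (sproj θ) (sproj τ))
        = ENNReal.ofReal ((f (sproj θ) - f (sproj τ)) ^ 2 /
            ‖Complex.exp (θ * Complex.I) - Complex.exp (τ * Complex.I)‖ ^ 2) := by
    intro θ hθ τ hτ
    have haθ : (0:ℝ) < 1 - Real.sin θ := by linarith [sin_lt_one_S hθ]
    have haτ : (0:ℝ) < 1 - Real.sin τ := by linarith [sin_lt_one_S hτ]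
    have hDθ : |D θ| = 1 / (1 - Real.sin θ) := abs_of_pos (by positivity)
    have hDτ : |D τ| = 1 / (1 - Real.sin τ) := abs_of_pos (by positivity)
    rw [hDθ, hDτ, normsq_exp_sub, hG]
    rw [← ENNReal.ofReal_mul (by positivity), ← ENNReal.ofReal_mul (by positivity)]
    congr 1
    set N : ℝ := 2 - 2 * (Real.cos θ * Real.cos τ + Real.sin θ * Real.sin τ) with hN
    set d : ℝ := sproj θ - sproj τ with hd
    have hDab : d * ((1 - Real.sin θ) * (1 - Real.sin τ))
        = Real.cos θ * (1 - Real.sin τ) - Real.cos τ * (1 - Real.sin θ) := by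
      rw [hd, sproj_eq, sproj_eq]
      field_simp
    have hD2 : d ^ 2 * ((1 - Real.sin θ) * (1 - Real.sin τ)) = N := by
      have hkey := key_id θ τ
      rw [← hDab] at hkey
      have hab : ((1 - Real.sin θ) * (1 - Real.sin τ)) ≠ 0 := by positivity
      apply mul_right_cancel₀ hab
      linear_combination hkey
    rcases eq_or_ne d 0 with hd0 | hd0
    · have hss : sproj θ = sproj τ := by rw [hd] at hd0; linarith
      have hN0 : N = 0 := by rw [← hD2, hd0]; ring
      rw [hss, hN0]
      simp
    · have hN0 : N ≠ 0 := by
        rw [← hD2]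
        positivity
      rw [← hD2]
      field_simp
      try exact Or.inl trivial
  -- Step 4: rewrite the double integral over S using the pointwise identity
  have hcongr : (∫⁻ θ in S, ENNReal.ofReal |D θ| * ∫⁻ y, G (sproj θ) y)
      = ∫⁻ θ in S, ∫⁻ τ in S,
          ENNReal.ofReal ((f (sproj θ) - f (sproj τ)) ^ 2 /
            ‖Complex.exp (θ * Complex.I) - Complex.exp (τ * Complex.I)‖ ^ 2) := by
    apply setLIntegral_congr_fun hSm
    intro θ hθ
    beta_reduce
    rw [hinner θ hθ]
    apply setLIntegral_congr_fun hSm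
    intro τ hτ
    beta_reduce
    exact hpt θ hθ τ hτ
  rw [hcongr]
  -- Step 5: S agrees a.e. with Ioc 0 (2π)
  have hrestrict : (volume : Measure ℝ).restrict S
      = (volume : Measure ℝ).restrict (Set.Ioc (0:ℝ) (2*π)) := by
    apply Measure.restrict_congr_set
    have hSeq : S = Set.Ioc (0:ℝ) (2*π) \ {π/2} := by
      ext x
      simp only [hS, Set.mem_union, Set.mem_Ioo, Set.mem_Ioc, Set.mem_diff,
        Set.mem_singleton_iff]
      constructor
      · rintro (⟨h1, h2⟩ | ⟨h1, h2⟩)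
        · exact ⟨⟨h1, by linarith⟩, by intro h; linarith⟩
        · exact ⟨⟨by linarith, h2⟩, by intro h; rw [h] at h1; linarith⟩
      · rintro ⟨⟨h1, h2⟩, h3⟩
        rcases lt_trichotomy x (π/2) with h | h | h
        · exact Or.inl ⟨h1, h⟩
        · exact absurd h h3
        · exact Or.inr ⟨h, h2⟩
    rw [hSeq]
    apply MeasureTheory.diff_ae_eq_self.2
    exact measure_mono_null Set.inter_subset_right (measure_singleton _)
  rw [hrestrict]
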